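/- In the setting of the generalized CHSH bound with hidden-variable-dependent efficiencies, if for every x the quantity E₁(α,x)E₂(β,x)/E(α,β) is independent of the measurement settings (α,β) (where E(α,β) = Σₓ p(x)E₁(α,x)E₂(β,x) and p is a probability distribution), then Σₓ p(x) · min_{(α,β)} E₁(α,x)E₂(β,x)/E(α,β) = 1, and consequently the postselected CHSH quantity satisfies |B| ≤ 2. -/

import Mathlib

/-!
Setting independence of `E₁(α,x) E₂(β,x) / E(α,β)` means that postselection reweights every
setting pair by the same density `ρ(x)`, which integrates to `1` against `p`. Writing
`a_α = Δ₁(α,·)/E₁(α,·)` and `b_β = Δ₂(β,·)/E₂(β,·)`, which lie in `[-1, 1]`, the postselected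
quantity becomes `B = ∑ₓ p(x) ρ(x) · chsh(a, b)(x)`, an average of local CHSH expressions,
each bounded by `2` in absolute value.
-/

open Finset

def chsh (a₁ a₂ b₁ b₂ : ℝ) : ℝ := a₁ * b₁ + a₁ * b₂ + a₂ * b₁ - a₂ * b₂

theorem abs_chsh_le_two {a₁ a₂ b₁ b₂ : ℝ} (ha₁ : |a₁| ≤ 1) (ha₂ : |a₂| ≤ 1)
    (hb₁ : |b₁| ≤ 1) (hb₂ : |b₂| ≤ 1) : |chsh a₁ a₂ b₁ b₂| ≤ 2 := by
  have hsplit : chsh a₁ a₂ b₁ b₂ = a₁ * (b₁ + b₂) + a₂ * (b₁ - b₂) := by unfold chsh; ring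
  have hb : |b₁ + b₂| + |b₁ - b₂| ≤ 2 := by
    rw [abs_le] at hb₁ hb₂
    rcases abs_cases (b₁ + b₂) with ⟨hsum, -⟩ | ⟨hsum, -⟩ <;>
      rcases abs_cases (b₁ - b₂) with ⟨hdiff, -⟩ | ⟨hdiff, -⟩ <;> linarith
  calc |chsh a₁ a₂ b₁ b₂|
      ≤ |a₁| * |b₁ + b₂| + |a₂| * |b₁ - b₂| := by
        rw [hsplit, ← abs_mul, ← abs_mul]; exact abs_add_le _ _
    _ ≤ 1 * |b₁ + b₂| + 1 * |b₁ - b₂| := by gcongr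
    _ ≤ 2 := by linarith

section WeightedSums

variable {X : Type*} [Fintype X]

theorem abs_sum_mul_le_of_abs_le {w f : X → ℝ} {c : ℝ} (hw : ∀ x, 0 ≤ w x)
    (hw1 : ∑ x, w x = 1) (hf : ∀ x, |f x| ≤ c) : |∑ x, w x * f x| ≤ c :=
  calc |∑ x, w x * f x| ≤ ∑ x, w x * c := by
        refine (abs_sum_le_sum_abs _ _).trans (sum_le_sum fun x _ => ?_)
        rw [abs_mul, abs_of_nonneg (hw x)]
        exact mul_le_mul_of_nonneg_left (hf x) (hw x)
    _ = c := by rw [← sum_mul, hw1, one_mul]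

theorem sum_mul_pos_of_sum_eq_one {p g : X → ℝ} (hp : ∀ x, 0 ≤ p x) (hp1 : ∑ x, p x = 1)
    (hg : ∀ x, 0 < g x) : 0 < ∑ x, p x * g x := by
  obtain ⟨x₀, -, hx₀⟩ := exists_ne_zero_of_sum_ne_zero (hp1.symm ▸ one_ne_zero : ∑ x, p x ≠ 0)
  exact sum_pos' (fun x _ => mul_nonneg (hp x) (hg x).le)
    ⟨x₀, mem_univ _, mul_pos ((hp x₀).lt_of_ne' hx₀) (hg x₀)⟩

theorem sum_mul_div_sum_mul_self {p g : X → ℝ} (hpg : ∑ x, p x * g x ≠ 0) :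
    ∑ x, p x * (g x / ∑ y, p y * g y) = 1 := by
  simp_rw [← mul_div_assoc, ← sum_div, div_self hpg]

theorem sum_mul_mul_div_eq_sum_mul_density {p d₁ d₂ e₁ e₂ ρ : X → ℝ} {c : ℝ}
    (hρ : ∀ x, e₁ x * e₂ x / c = ρ x) (he₁ : ∀ x, e₁ x ≠ 0) (he₂ : ∀ x, e₂ x ≠ 0) :
    (∑ x, p x * d₁ x * d₂ x) / c = ∑ x, p x * ρ x * (d₁ x / e₁ x * (d₂ x / e₂ x)) := by
  rw [sum_div]
  refine sum_congr rfl fun x _ => ?_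
  rw [← hρ x]
  have := he₁ x
  have := he₂ x
  field_simp

end WeightedSums

/-- Lemma 2 (sufficiency direction): if E₁(α,x)E₂(β,x)/E(α,β) is independent
of the settings (α,β), then ∑ₓ p(x) min_{(α,β)} E₁E₂/E = 1 and the
postselected CHSH quantity satisfies |B| ≤ 2. Settings encoded by `Bool`. -/
theorem chsh_fair_sampling_bound (X : Type) [Fintype X]
    (p : X → ℝ) (hp : ∀ x, 0 ≤ p x) (hp1 : ∑ x, p x = 1)
    (Δ₁ E₁ Δ₂ E₂ : Bool → X → ℝ)
    (hE₁ : ∀ α x, 0 < E₁ α x) (hE₂ : ∀ β x, 0 < E₂ β x)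
    (hΔ₁ : ∀ α x, |Δ₁ α x| ≤ E₁ α x) (hΔ₂ : ∀ β x, |Δ₂ β x| ≤ E₂ β x)
    (E : Bool → Bool → ℝ)
    (hE : ∀ α β, E α β = ∑ x, p x * E₁ α x * E₂ β x)
    (hind : ∀ x (α β α' β' : Bool),
      E₁ α x * E₂ β x / E α β = E₁ α' x * E₂ β' x / E α' β')
    (B : ℝ)
    (hB : B = (∑ x, p x * Δ₁ true x * Δ₂ true x) / E true true
            + (∑ x, p x * Δ₁ true x * Δ₂ false x) / E true false
            + (∑ x, p x * Δ₁ false x * Δ₂ true x) / E false true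
            - (∑ x, p x * Δ₁ false x * Δ₂ false x) / E false false) :
    (∑ x, p x *
      min (min (E₁ true x * E₂ true x / E true true)
               (E₁ true x * E₂ false x / E true false))
          (min (E₁ false x * E₂ true x / E false true)
               (E₁ false x * E₂ false x / E false false))) = 1
    ∧ |B| ≤ 2 := by
  set ρ : X → ℝ := fun x => E₁ true x * E₂ true x / E true true
  have hρ : ∀ x α β, E₁ α x * E₂ β x / E α β = ρ x := fun x α β => hind x α β true true
  have hEtt : 0 < E true true := by
    simpa only [hE, mul_assoc] using
      sum_mul_pos_of_sum_eq_one hp hp1 fun x => mul_pos (hE₁ true x) (hE₂ true x)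
  have hρsum : ∑ x, p x * ρ x = 1 := by
    simpa only [ρ, hE, mul_assoc] using sum_mul_div_sum_mul_self (g := fun x => E₁ true x * E₂ true x)
      (by simpa only [hE, mul_assoc] using hEtt.ne')
  refine ⟨by simpa only [hρ, min_self] using hρsum, ?_⟩
  set a : Bool → X → ℝ := fun α x => Δ₁ α x / E₁ α x
  set b : Bool → X → ℝ := fun β x => Δ₂ β x / E₂ β x
  have hnorm : ∀ {d e : ℝ}, |d| ≤ e → 0 < e → |d / e| ≤ 1 := fun hd he => by
    rw [abs_div, abs_of_pos he]; exact div_le_one_of_le₀ hd he.le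
  have hcorr : ∀ α β, (∑ x, p x * Δ₁ α x * Δ₂ β x) / E α β = ∑ x, p x * ρ x * (a α x * b β x) :=
    fun α β => sum_mul_mul_div_eq_sum_mul_density (hρ · α β) (fun x => (hE₁ α x).ne')
      fun x => (hE₂ β x).ne'
  have hBavg : B = ∑ x, p x * ρ x * chsh (a true x) (a false x) (b true x) (b false x) := by
    simp only [hB, hcorr, chsh, ← sum_add_distrib, ← sum_sub_distrib]
    exact sum_congr rfl fun x _ => by ring
  rw [hBavg]
  exact abs_sum_mul_le_of_abs_le (fun x => mul_nonneg (hp x) (div_pos (mul_pos (hE₁ _ _)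
    (hE₂ _ _)) hEtt).le) hρsum fun x => abs_chsh_le_two (hnorm (hΔ₁ _ _) (hE₁ _ _))
    (hnorm (hΔ₁ _ _) (hE₁ _ _)) (hnorm (hΔ₂ _ _) (hE₂ _ _)) (hnorm (hΔ₂ _ _) (hE₂ _ _))
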